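/- arXiv:2202.09095 — 3 statements merged into one kernel-verified Lean document; each statement's English description precedes it below -/
import Mathlib

section
/- The minimum distance of the binary Reed–Muller code RM(r,m) equals 2^(m-r). -/
open MvPolynomial Finset

noncomputable def evalLM (m : ℕ) :
    MvPolynomial (Fin m) (ZMod 2) →ₗ[ZMod 2] ((Fin m → ZMod 2) → ZMod 2) where
  toFun f := fun P => eval P f
  map_add' f g := by funext P; simp
  map_smul' c f := by funext P; simp

/-- The binary Reed–Muller code `RM(r,m)`: evaluation vectors of polynomials of
total degree at most `r`, with coordinates indexed by the points of `F_2^m`. -/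
noncomputable def RM (r m : ℕ) : Submodule (ZMod 2) ((Fin m → ZMod 2) → ZMod 2) :=
  (restrictTotalDegree (Fin m) (ZMod 2) r).map (evalLM m)

/-- Hamming weight of a word indexed by `F_2^m`. -/
noncomputable def wt {m : ℕ} (v : (Fin m → ZMod 2) → ZMod 2) : ℕ :=
  (Finset.univ.filter fun P => v P ≠ 0).card

/-- Dual code with respect to the standard bilinear form. -/
def dualCode {m : ℕ} (C : Submodule (ZMod 2) ((Fin m → ZMod 2) → ZMod 2)) :
    Submodule (ZMod 2) ((Fin m → ZMod 2) → ZMod 2) where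
  carrier := {v | ∀ c ∈ C, ∑ P, v P * c P = 0}
  add_mem' := by
    intro a b ha hb c hc
    have h : ∑ P, (a P + b P) * c P = (∑ P, a P * c P) + ∑ P, b P * c P := by
      rw [← Finset.sum_add_distrib]
      exact Finset.sum_congr rfl fun P _ => by ring
    simp [Set.mem_setOf_eq, Pi.add_apply] at *
    rw [h, ha c hc, hb c hc, add_zero]
  zero_mem' := by intro c hc; simp
  smul_mem' := by
    intro t a ha c hc
    have h : ∑ P, (t * a P) * c P = t * ∑ P, a P * c P := by
      rw [Finset.mul_sum]
      exact Finset.sum_congr rfl fun P _ => by ring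
    simp only [Set.mem_setOf_eq, Pi.smul_apply, smul_eq_mul]
    rw [h, ha c hc, mul_zero]

/-- Star (Schur, coordinatewise) product of two codes. -/
def starProd {m : ℕ} (C D : Submodule (ZMod 2) ((Fin m → ZMod 2) → ZMod 2)) :
    Submodule (ZMod 2) ((Fin m → ZMod 2) → ZMod 2) :=
  Submodule.span (ZMod 2) {v | ∃ c ∈ C, ∃ d ∈ D, v = c * d}

/-- `σ` is a (permutation) automorphism of the code `C`. -/
def IsAutomorphism {m : ℕ} (C : Submodule (ZMod 2) ((Fin m → ZMod 2) → ZMod 2))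
    (σ : Equiv.Perm (Fin m → ZMod 2)) : Prop :=
  ∀ c ∈ C, (fun P => c (σ P)) ∈ C

/-- `I` is an information set of the code `C`. -/
noncomputable def IsInformationSet {m : ℕ}
    (C : Submodule (ZMod 2) ((Fin m → ZMod 2) → ZMod 2))
    (I : Finset (Fin m → ZMod 2)) : Prop :=
  I.card = Module.finrank (ZMod 2) C ∧
    Function.Injective fun c : C => fun i : I => (c : (Fin m → ZMod 2) → ZMod 2) i.1

lemma zmod2_sum (F : ZMod 2 → ℕ) : ∑ a : ZMod 2, F a = F 0 + F 1 :=
  Fin.sum_univ_two F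

lemma wt_split {m : ℕ} (v : (Fin (m+1) → ZMod 2) → ZMod 2) :
    wt v = wt (fun Q => v (Fin.cons 0 Q)) + wt (fun Q => v (Fin.cons 1 Q)) := by
  classical
  unfold wt
  rw [Finset.card_filter, Finset.card_filter, Finset.card_filter]
  rw [← Fintype.sum_equiv (Fin.consEquiv (fun _ : Fin (m+1) => ZMod 2))
      (fun x => if v ((Fin.consEquiv (fun _ : Fin (m+1) => ZMod 2)) x) ≠ 0 then 1 else 0)
      (fun P => if v P ≠ 0 then 1 else 0) (fun x => rfl)]
  rw [Fintype.sum_prod_type]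
  exact zmod2_sum fun a => ∑ Q : Fin m → ZMod 2, if v (Fin.cons a Q) ≠ 0 then 1 else 0

lemma wt_pos {m : ℕ} {v : (Fin m → ZMod 2) → ZMod 2} (h : v ≠ 0) : 1 ≤ wt v := by
  obtain ⟨P, hP⟩ := Function.ne_iff.mp h
  exact Finset.card_pos.mpr ⟨P, by simpa using hP⟩

lemma wt_le_add {m : ℕ} (a b : (Fin m → ZMod 2) → ZMod 2) :
    wt (a + b) ≤ wt a + wt b := by
  classical
  refine le_trans (Finset.card_le_card ?_) (Finset.card_union_le _ _)
  intro P hP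
  simp only [wt, Finset.mem_filter, Finset.mem_union, Finset.mem_univ, true_and,
    Pi.add_apply] at *
  by_contra hc
  push_neg at hc
  rw [hc.1, hc.2] at hP
  simp at hP

lemma rm_lower : ∀ (m r : ℕ) (f : MvPolynomial (Fin m) (ZMod 2)),
    f.totalDegree ≤ r → (fun P => eval P f) ≠ 0 →
    2 ^ (m - r) ≤ wt (fun P => eval P f) := by
  intro m
  induction m with
  | zero =>
    intro r f hd hne
    simpa [Nat.zero_sub] using wt_pos hne
  | succ m ih =>
    intro r f hd hne
    rcases le_or_gt (m+1) r with hr | hr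
    · rw [Nat.sub_eq_zero_of_le hr]
      simpa using wt_pos hne
    · have hrm : r ≤ m := Nat.lt_succ_iff.mp hr
      set q := finSuccEquiv (ZMod 2) m f with hq
      set g : MvPolynomial (Fin m) (ZMod 2) := q.coeff 0 with hg
      set s : MvPolynomial (Fin m) (ZMod 2) := q.eval 1 with hs
      set h : MvPolynomial (Fin m) (ZMod 2) := s - g with hh
      -- evaluation identities
      have heval0 : ∀ Q : Fin m → ZMod 2, eval (Fin.cons 0 Q) f = eval Q g := by
        intro Q
        rw [eval_eq_eval_mv_eval']
        rw [← Polynomial.coeff_zero_eq_eval_zero, Polynomial.coeff_map]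
      have heval1 : ∀ Q : Fin m → ZMod 2, eval (Fin.cons 1 Q) f = eval Q s := by
        intro Q
        rw [eval_eq_eval_mv_eval', Polynomial.eval_one_map]
      -- degree bounds
      have hgd : g.totalDegree ≤ r := by
        by_cases h0 : g = 0
        · simp [h0]
        · have := totalDegree_coeff_finSuccEquiv_add_le f 0 h0
          rw [← hq, ← hg] at this
          omega
      have hcoeffd : ∀ k, 1 ≤ k → q.coeff k ≠ 0 →
          (q.coeff k).totalDegree ≤ r - 1 ∧ 1 ≤ r := by
        intro k hk h0
        have := totalDegree_coeff_finSuccEquiv_add_le f k h0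
        rw [← hq] at this
        omega
      have hsum : s = ∑ k ∈ Finset.range (q.natDegree + 1), q.coeff k := by
        rw [hs, Polynomial.eval_eq_sum_range]
        simp
      have hhsum : h = ∑ k ∈ Finset.Ico 1 (q.natDegree + 1), q.coeff k := by
        rw [hh, hsum, Finset.range_eq_Ico,
          Finset.sum_eq_sum_Ico_succ_bot (Nat.succ_pos _)]
        simp [hg]
      have hhd : h.totalDegree ≤ r - 1 := by
        rw [hhsum]
        refine totalDegree_finsetSum_le ?_
        intro k hk
        by_cases h0 : q.coeff k = 0
        · simp [h0]
        · exact (hcoeffd k (Finset.mem_Ico.mp hk).1 h0).1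
      -- split the weight
      have hw : wt (fun P => eval P f)
          = wt (fun Q => eval Q g) + wt (fun Q => eval Q s) := by
        rw [wt_split]
        congr 1
        · congr 1; funext Q; exact heval0 Q
        · congr 1; funext Q; exact heval1 Q
      by_cases hhv : (fun Q => eval Q h) = (0 : (Fin m → ZMod 2) → ZMod 2)
      · -- h evaluates to zero everywhere, so s and g agree as functions
        have hsg : ∀ Q, eval Q s = eval Q g := by
          intro Q
          have := congrFun hhv Q
          simp only [hh, map_sub, Pi.zero_apply] at this ⊢
          have : eval Q s - eval Q g = 0 := this
          linear_combination this
        have hgv : (fun Q => eval Q g) ≠ 0 := by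
          intro h0
          apply hne
          funext P
          have hP : P = Fin.cons (P 0) (Fin.tail P) := (Fin.cons_self_tail P).symm
          rw [hP]
          have h2 : P 0 = 0 ∨ P 0 = 1 :=
            (by decide : ∀ a : ZMod 2, a = 0 ∨ a = 1) (P 0)
          rcases h2 with h2 | h2
          · rw [h2, heval0]; rw [show (0 : ((Fin m → ZMod 2) → ZMod 2)) = fun _ => 0 from rfl] at h0
            exact congrFun h0 _
          · rw [h2, heval1, hsg]; exact congrFun h0 _
        have := ih r g hgd hgv
        have hww : wt (fun Q => eval Q s) = wt (fun Q => eval Q g) := by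
          congr 1; funext Q; exact hsg Q
        rw [hw, hww]
        have h2 : 2 ^ (m + 1 - r) = 2 ^ (m - r) + 2 ^ (m - r) := by
          have : m + 1 - r = (m - r) + 1 := by omega
          rw [this, pow_succ]; ring
        omega
      · -- h evaluates nonzero somewhere
        have hh0 : h ≠ 0 := by
          intro h0; apply hhv; funext Q; simp [h0]
        have hr1 : 1 ≤ r := by
          by_contra hr0
          apply hh0
          rw [hhsum]
          refine Finset.sum_eq_zero ?_
          intro k hk
          by_contra h0
          have := (hcoeffd k (Finset.mem_Ico.mp hk).1 h0).2
          omega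
        have hih := ih (r-1) h hhd hhv
        have hle : wt (fun Q => eval Q h) ≤
            wt (fun Q => eval Q g) + wt (fun Q => eval Q s) := by
          have hfun : (fun Q => eval Q h) =
              (fun Q => eval Q g) + (fun Q => eval Q s) := by
            funext Q
            simp only [hh, map_sub, Pi.add_apply]
            ring_nf
            rw [CharTwo.sub_eq_add]
          rw [hfun]
          exact wt_le_add _ _
        have : m - (r - 1) = m + 1 - r := by omega
        rw [this] at hih
        omega

/-- The minimum distance of `RM(r,m)` equals `2^(m-r)`: it is the least Hamming
weight of a nonzero codeword. -/
theorem stmt1 (r m : ℕ) (hrm : r ≤ m) :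
    IsLeast {w : ℕ | ∃ c ∈ RM r m, c ≠ 0 ∧ wt c = w} (2 ^ (m - r)) := by
  classical
  have key : ∀ a : ZMod 2, a ≠ 0 ↔ a = 1 := by decide
  constructor
  · -- a codeword of weight exactly 2^(m-r): the product of the first r coordinates
    set S : Finset (Fin m) := Finset.image (Fin.castLE hrm) Finset.univ with hS
    have hScard : S.card = r := by
      rw [hS, Finset.card_image_of_injective _ (Fin.castLE_injective hrm), Finset.card_univ,
        Fintype.card_fin]
    refine ⟨fun P => ∏ i ∈ S, P i, Submodule.mem_map.mpr ⟨∏ i ∈ S, X i, ?_, ?_⟩, ?_, ?_⟩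
    · rw [mem_restrictTotalDegree]
      calc (∏ i ∈ S, (X i : MvPolynomial (Fin m) (ZMod 2))).totalDegree
          ≤ ∑ i ∈ S, (X i : MvPolynomial (Fin m) (ZMod 2)).totalDegree :=
            totalDegree_finset_prod S _
        _ ≤ r := by simp [totalDegree_X, hScard]
    · show (fun P => eval P (∏ i ∈ S, (X i : MvPolynomial (Fin m) (ZMod 2)))) = _
      funext P
      simp [map_prod]
    · intro h0
      have := congrFun h0 (fun _ => 1)
      simp at this
    · show wt (fun P => ∏ i ∈ S, P i) = 2 ^ (m - r)
      unfold wt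
      have hfilter : (Finset.univ.filter fun P : Fin m → ZMod 2 => (∏ i ∈ S, P i) ≠ 0)
          = Fintype.piFinset
              (fun i => if i ∈ S then ({1} : Finset (ZMod 2)) else Finset.univ) := by
        ext P
        simp only [Finset.mem_filter, Finset.mem_univ, true_and, Fintype.mem_piFinset]
        rw [Finset.prod_ne_zero_iff]
        constructor
        · intro hp i
          by_cases hi : i ∈ S
          · simpa [hi] using (key (P i)).mp (hp i hi)
          · simp [hi]
        · intro hp i hi
          have := hp i
          rw [if_pos hi, Finset.mem_singleton] at this
          rw [this]
          exact one_ne_zero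
      rw [hfilter, Fintype.card_piFinset]
      rw [← Finset.prod_mul_prod_compl S]
      have h1 : ∏ i ∈ S,
          (if i ∈ S then ({1} : Finset (ZMod 2)) else Finset.univ).card = 1 :=
        Finset.prod_eq_one (by intro i hi; simp [hi])
      have h2 : ∀ i ∈ Sᶜ,
          (if i ∈ S then ({1} : Finset (ZMod 2)) else Finset.univ).card = 2 := by
        intro i hi
        rw [Finset.mem_compl] at hi
        simp [hi]
      rw [h1, one_mul, Finset.prod_congr rfl h2, Finset.prod_const, Finset.card_compl,
        hScard, Fintype.card_fin]
  · rintro w ⟨c, hc, hc0, rfl⟩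
    obtain ⟨f, hf, rfl⟩ := Submodule.mem_map.mp hc
    exact rm_lower m r f ((mem_restrictTotalDegree _ _ _).mp hf) hc0
end

section
/- The dual code of the binary Reed–Muller code RM(r,m), for r < m, is RM(m-r-1, m). -/
open MvPolynomial Finset

/-- Sum over all points of a product over coordinates factors as product of sums. -/
lemma sum_prod_eval (m : ℕ) (h : Fin m → ZMod 2 → ZMod 2) :
    ∑ P : Fin m → ZMod 2, ∏ i, h i (P i) = ∏ i, ∑ x : ZMod 2, h i x := by
  rw [Finset.prod_univ_sum]
  rw [Fintype.piFinset_univ]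

/-- Key pairing computation: pairing eval f with the indicator-like product picks out a coefficient. -/
lemma key (m : ℕ) (f : MvPolynomial (Fin m) (ZMod 2))
    (hf : ∀ e ∈ f.support, ∀ i, e i ≤ 1) (d : Fin m →₀ ℕ) (hd : ∀ i, d i ≤ 1) :
    ∑ P : Fin m → ZMod 2, eval P f * eval P (∏ i ∈ d.supportᶜ, (X i + 1)) = f.coeff d := by
  have step1 : ∀ P : Fin m → ZMod 2,
      eval P f * eval P (∏ i ∈ d.supportᶜ, (X i + 1 : MvPolynomial (Fin m) (ZMod 2)))
        = ∑ e ∈ f.support, f.coeff e *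
            ∏ i, (P i ^ e i * (if i ∈ d.support then 1 else P i + 1)) := by
    intro P
    have hgP : eval P (∏ i ∈ d.supportᶜ, (X i + 1 : MvPolynomial (Fin m) (ZMod 2)))
        = ∏ i, (if i ∈ d.support then 1 else P i + 1) := by
      calc eval P (∏ i ∈ d.supportᶜ, (X i + 1 : MvPolynomial (Fin m) (ZMod 2)))
          = ∏ i ∈ d.supportᶜ, (P i + 1) := by simp
        _ = ∏ i ∈ d.supportᶜ, (if i ∈ d.support then 1 else P i + 1) :=
            Finset.prod_congr rfl fun x hx => (if_neg (Finset.mem_compl.mp hx)).symm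
        _ = ∏ i, (if i ∈ d.support then 1 else P i + 1) :=
            Finset.prod_subset (Finset.subset_univ _) (fun x _ hx => if_pos (by simpa using hx))
    rw [hgP, eval_eq', Finset.sum_mul]
    refine Finset.sum_congr rfl fun e _ => ?_
    rw [mul_assoc, ← Finset.prod_mul_distrib]
  calc ∑ P : Fin m → ZMod 2, eval P f * eval P (∏ i ∈ d.supportᶜ, (X i + 1))
      = ∑ e ∈ f.support, f.coeff e *
          ∑ P : Fin m → ZMod 2, ∏ i, (P i ^ e i * (if i ∈ d.support then 1 else P i + 1)) := by
        simp only [step1]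
        rw [Finset.sum_comm]
        exact Finset.sum_congr rfl fun e _ => (Finset.mul_sum _ _ _).symm
    _ = ∑ e ∈ f.support, f.coeff e * (if e = d then 1 else 0) := by
        refine Finset.sum_congr rfl fun e he => ?_
        congr 1
        rw [sum_prod_eval m (fun i x => x ^ e i * (if i ∈ d.support then 1 else x + 1))]
        by_cases hed : e = d
        · subst hed
          rw [if_pos rfl]
          apply Finset.prod_eq_one
          intro i _
          by_cases hi : i ∈ e.support
          · have h1 : e i = 1 :=
              le_antisymm (hf e he i) (Nat.one_le_iff_ne_zero.mpr (Finsupp.mem_support_iff.mp hi))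
            simp only [if_pos hi, h1]; decide
          · have h0 : e i = 0 := Finsupp.notMem_support_iff.mp hi
            simp only [if_neg hi, h0]; decide
        · rw [if_neg hed]
          obtain ⟨i, hi⟩ : ∃ i, e i ≠ d i := by
            by_contra hcon
            push_neg at hcon
            exact hed (Finsupp.ext hcon)
          apply Finset.prod_eq_zero (Finset.mem_univ i)
          by_cases hmem : i ∈ d.support
          · have hd1 : d i = 1 :=
              le_antisymm (hd i) (Nat.one_le_iff_ne_zero.mpr (Finsupp.mem_support_iff.mp hmem))
            have he0 : e i = 0 := by
              have := hf e he i; omega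
            simp only [if_pos hmem, he0]; decide
          · have hd0 : d i = 0 := Finsupp.notMem_support_iff.mp hmem
            have he1 : e i = 1 := by
              have := hf e he i; omega
            simp only [if_neg hmem, he1]; decide
    _ = f.coeff d := by
        simp only [mul_ite, mul_one, mul_zero]
        rw [Finset.sum_ite_eq' f.support d (fun e => f.coeff e)]
        by_cases h : d ∈ f.support
        · rw [if_pos h]
        · rw [if_neg h, (MvPolynomial.notMem_support_iff.mp h)]

theorem stmt2' (r m : ℕ) (hrm : r < m) :
    dualCode (RM r m) = RM (m - r - 1) m := by
  apply le_antisymm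
  · -- dual ⊆ RM(m-r-1)
    intro v hv
    have hv' : ∀ c ∈ RM r m, ∑ P, v P * c P = 0 := hv
    obtain ⟨f, hf1, hf2⟩ : ∃ f ∈ restrictDegree (Fin m) (ZMod 2) 1,
        (evalₗ (ZMod 2) (Fin m)) f = v := by
      have h := map_restrict_dom_evalₗ (K := ZMod 2) (σ := Fin m)
      have hcard : Fintype.card (ZMod 2) - 1 = 1 := by simp [ZMod.card]
      rw [hcard] at h
      exact Submodule.mem_map.mp (by rw [h]; trivial)
    have hf1' : ∀ e ∈ f.support, ∀ i, e i ≤ 1 := by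
      rw [mem_restrictDegree] at hf1; exact hf1
    refine Submodule.mem_map.mpr ⟨f, ?_, hf2⟩
    rw [mem_restrictTotalDegree, totalDegree]
    apply Finset.sup_le
    intro d hd
    by_contra hgt
    push_neg at hgt
    have hd1 : ∀ i, d i ≤ 1 := by
      intro i
      by_cases h : i ∈ d.support
      · exact hf1' d hd i
      · simp [Finsupp.notMem_support_iff.mp h]
    have hsum : (d.sum fun _ e => e) = d.support.card := by
      rw [Finsupp.sum, Finset.card_eq_sum_ones]
      refine Finset.sum_congr rfl fun i hi => ?_
      exact le_antisymm (hd1 i) (Nat.one_le_iff_ne_zero.mpr (Finsupp.mem_support_iff.mp hi))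
    have hcompl : d.supportᶜ.card ≤ r := by
      have h1 : d.support.card ≤ m := by simpa using Finset.card_le_univ d.support
      have h2 : d.supportᶜ.card = m - d.support.card := by
        rw [Finset.card_compl]; simp
      omega
    set g : MvPolynomial (Fin m) (ZMod 2) := ∏ i ∈ d.supportᶜ, (X i + 1) with hgdef
    have hgmem : g ∈ restrictTotalDegree (Fin m) (ZMod 2) r := by
      rw [mem_restrictTotalDegree]
      refine le_trans (totalDegree_finset_prod _ _) ?_
      refine le_trans (Finset.sum_le_card_nsmul _ _ 1 ?_) ?_
      · intro i _
        refine le_trans (totalDegree_add _ _) ?_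
        simp [totalDegree_X]
      · simpa using hcompl
    have h0 := hv' (evalLM m g) (Submodule.mem_map.mpr ⟨g, hgmem, rfl⟩)
    rw [← hf2] at h0
    have hk := key m f hf1' d hd1
    have hzero : f.coeff d = 0 := by rw [← hk]; exact h0
    exact (MvPolynomial.mem_support_iff.mp hd) hzero
  · -- RM(m-r-1) ⊆ dual
    intro v hv
    obtain ⟨g, hg, rfl⟩ := Submodule.mem_map.mp hv
    show ∀ c ∈ RM r m, ∑ P, evalLM m g P * c P = 0
    intro c hc
    obtain ⟨p, hp, rfl⟩ := Submodule.mem_map.mp hc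
    rw [mem_restrictTotalDegree] at hg hp
    have hcards : (Fintype.card (ZMod 2) - 1) * Fintype.card (Fin m) = m := by
      simp [ZMod.card]
    have hdeg : (g * p).totalDegree < (Fintype.card (ZMod 2) - 1) * Fintype.card (Fin m) := by
      rw [hcards]
      have h3 := totalDegree_mul g p
      omega
    have hz := MvPolynomial.sum_eval_eq_zero (g * p) hdeg
    calc ∑ P, evalLM m g P * evalLM m p P
        = ∑ P : Fin m → ZMod 2, eval P (g * p) := by
          refine Finset.sum_congr rfl fun P _ => ?_
          simp [evalLM]
      _ = 0 := hz

/-- The dual code of `RM(r,m)` is `RM(m-r-1,m)` for `r < m`. -/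
theorem stmt2 (r m : ℕ) (hrm : r < m) :
    dualCode (RM r m) = RM (m - r - 1) m := stmt2' r m hrm
end

section
/- For r, r' < m with r + r' ≤ m, the star product of RM(r,m) and RM(r',m) equals RM(r+r', m). -/
open MvPolynomial Finset

lemma split_finsupp {m : ℕ} (a : ℕ) : ∀ (s : Fin m →₀ ℕ) (b : ℕ),
    (∑ i, s i) ≤ a + b → ∃ s1 s2 : Fin m →₀ ℕ,
      s = s1 + s2 ∧ (∑ i, s1 i) ≤ a ∧ (∑ i, s2 i) ≤ b := by
  induction a with
  | zero =>
    intro s b h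
    exact ⟨0, s, by simp, by simp, by simpa using h⟩
  | succ a ih =>
    intro s b h
    by_cases hs : s = 0
    · exact ⟨0, 0, by simp [hs], by simp, by simp⟩
    · obtain ⟨i, hi⟩ : ∃ i, s i ≠ 0 := by
        by_contra hc
        push_neg at hc
        exact hs (Finsupp.ext fun j => hc j)
      set s' := s - Finsupp.single i 1 with hs'
      have hdec : s = Finsupp.single i 1 + s' := by
        ext j
        simp only [hs', Finsupp.add_apply, Finsupp.tsub_apply, Finsupp.single_apply]
        by_cases hj : i = j
        · subst hj; rw [if_pos rfl]; omega
        · simp [hj]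
      have hsum : (∑ j, s j) = 1 + ∑ j, s' j := by
        rw [hdec]
        simp [Finsupp.add_apply, Finsupp.single_apply, Finset.sum_add_distrib,
          Finset.sum_ite_eq]
      obtain ⟨s1, s2, he, h1, h2⟩ := ih s' b (by omega)
      refine ⟨Finsupp.single i 1 + s1, s2, by rw [hdec, he, add_assoc], ?_, h2⟩
      have : (∑ j, (Finsupp.single i 1 + s1 : Fin m →₀ ℕ) j) = 1 + ∑ j, s1 j := by
        simp [Finsupp.add_apply, Finsupp.single_apply, Finset.sum_add_distrib,
          Finset.sum_ite_eq]
      omega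

lemma sum_eq_finsupp_sum {m : ℕ} (s : Fin m →₀ ℕ) : (s.sum fun _ e => e) = ∑ i, s i :=
  Finsupp.sum_fintype _ _ (fun _ => rfl)

lemma monomial_mem_RT {m n : ℕ} (s : Fin m →₀ ℕ) (h : (∑ i, s i) ≤ n) :
    (monomial s (1 : ZMod 2)) ∈ restrictTotalDegree (Fin m) (ZMod 2) n := by
  rw [mem_restrictTotalDegree, totalDegree_monomial s one_ne_zero, sum_eq_finsupp_sum]
  exact h

/-- The star product of `RM(r,m)` and `RM(r',m)` is `RM(r+r',m)`. -/
theorem stmt3 (r r' m : ℕ) (hr : r < m) (hr' : r' < m) (hsum : r + r' ≤ m) :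
    starProd (RM r m) (RM r' m) = RM (r + r') m := by
  apply le_antisymm
  · rw [starProd]
    apply Submodule.span_le.mpr
    rintro v ⟨c, hc, d, hd, rfl⟩
    obtain ⟨f, hf, rfl⟩ := hc
    obtain ⟨g, hg, rfl⟩ := hd
    refine ⟨f * g, ?_, ?_⟩
    · simp only [SetLike.mem_coe, mem_restrictTotalDegree] at hf hg ⊢
      exact le_trans (totalDegree_mul f g) (add_le_add hf hg)
    · funext P; simp [evalLM]
  · rintro v ⟨f, hf, rfl⟩
    have hrw : evalLM m f = ∑ s ∈ f.support, coeff s f • evalLM m (monomial s 1) := by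
      conv_lhs => rw [as_sum f]
      rw [map_sum]
      refine Finset.sum_congr rfl fun s _ => ?_
      rw [← map_smul]
      congr 1
      rw [smul_monomial, smul_eq_mul, mul_one]
    rw [hrw]
    apply Submodule.sum_mem
    intro s hs
    apply Submodule.smul_mem
    have hdeg : (∑ i, s i) ≤ r + r' := by
      rw [← sum_eq_finsupp_sum]
      exact le_trans (le_totalDegree hs) ((mem_restrictTotalDegree _ _ f).1 hf)
    obtain ⟨s1, s2, rfl, h1, h2⟩ := split_finsupp r s r' hdeg
    have hmul : evalLM m (monomial (s1 + s2) (1 : ZMod 2)) =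
        evalLM m (monomial s1 1) * evalLM m (monomial s2 1) := by
      funext P
      have : (monomial (s1 + s2) (1 : ZMod 2)) = monomial s1 1 * monomial s2 1 := by
        rw [monomial_mul, mul_one]
      simp only [evalLM, LinearMap.coe_mk, AddHom.coe_mk, Pi.mul_apply]
      rw [this, map_mul]
    rw [hmul]
    apply Submodule.subset_span
    exact ⟨_, ⟨monomial s1 1, monomial_mem_RT s1 h1, rfl⟩,
           _, ⟨monomial s2 1, monomial_mem_RT s2 h2, rfl⟩, rfl⟩
end
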